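/- arXiv:1607.07625 — 6 statements merged into one kernel-verified Lean document; each statement's English description precedes it below -/
import Mathlib

section
/- For any Hermitian operator A on a finite-dimensional complex Hilbert space and any operator T with 0 ≤ T ≤ I, we have tr(A · {A > 0}) ≥ tr(A · T), where {A > 0} is the projection onto the positive eigenspace of A. -/
open Matrix
open scoped ComplexOrder

/-- Spectral projection of a Hermitian matrix onto the eigenspaces whose
eigenvalue satisfies the predicate `pred`. -/
noncomputable def specProj {ι : Type*} [Fintype ι] [DecidableEq ι]
    {A : Matrix ι ι ℂ} (hA : A.IsHermitian) (pred : ℝ → Prop) : Matrix ι ι ℂ :=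
  letI := Classical.decPred pred
  (hA.eigenvectorUnitary : Matrix ι ι ℂ) *
    Matrix.diagonal (fun i => if pred (hA.eigenvalues i) then (1 : ℂ) else 0) *
    star (hA.eigenvectorUnitary : Matrix ι ι ℂ)

lemma psd_diag_re_nonneg {ι : Type*} [Fintype ι] [DecidableEq ι]
    {S : Matrix ι ι ℂ} (hS : S.PosSemidef) (i : ι) : 0 ≤ (S i i).re := by
  have h := hS.dotProduct_mulVec_nonneg (Pi.single i 1)
  have : star (Pi.single i 1 : ι → ℂ) ⬝ᵥ S *ᵥ Pi.single i 1 = S i i := by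
    simp [Matrix.mulVec_single, dotProduct, Pi.single_apply, apply_ite (star : ℂ → ℂ)]
  rw [this] at h
  exact (Complex.le_def.mp h).1

lemma trace_diagonal_mul {ι : Type*} [Fintype ι] [DecidableEq ι]
    (d : ι → ℂ) (M : Matrix ι ι ℂ) :
    Matrix.trace (Matrix.diagonal d * M) = ∑ i, d i * M i i := by
  simp [Matrix.trace, Matrix.diag, Matrix.diagonal_mul]

/-- For any Hermitian `A` and `0 ≤ T ≤ I`,
`tr(A · {A > 0}) ≥ tr(A · T)`. -/
theorem trace_posProj_ge {ι : Type*} [Fintype ι] [DecidableEq ι]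
    {A T : Matrix ι ι ℂ} (hA : A.IsHermitian)
    (hT₀ : T.PosSemidef) (hT₁ : (1 - T).PosSemidef) :
    (Matrix.trace (A * specProj hA (fun x => 0 < x))).re ≥
      (Matrix.trace (A * T)).re := by
  classical
  set U : Matrix ι ι ℂ := (hA.eigenvectorUnitary : Matrix ι ι ℂ) with hUdef
  have hU1 : star U * U = 1 := (Matrix.mem_unitaryGroup_iff').mp hA.eigenvectorUnitary.2
  have hU2 : U * star U = 1 := (Matrix.mem_unitaryGroup_iff).mp hA.eigenvectorUnitary.2
  set d : ι → ℂ := fun i => (hA.eigenvalues i : ℂ) with hd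
  set S : Matrix ι ι ℂ := star U * T * U with hSdef
  have hS0 : S.PosSemidef := by
    have := hT₀.mul_mul_conjTranspose_same (star U)
    simpa [hSdef, Matrix.star_eq_conjTranspose, Matrix.mul_assoc] using this
  have hS1 : (1 - S).PosSemidef := by
    have := hT₁.mul_mul_conjTranspose_same (star U)
    have hU1' : Uᴴ * U = 1 := by rw [← Matrix.star_eq_conjTranspose]; exact hU1
    have e : star U * (1 - T) * (star U)ᴴ = 1 - S := by
      rw [Matrix.star_eq_conjTranspose, Matrix.conjTranspose_conjTranspose,
        Matrix.mul_sub, Matrix.mul_one, Matrix.sub_mul, hU1', hSdef,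
        Matrix.star_eq_conjTranspose]
    rwa [e] at this
  have hspec : A = U * Matrix.diagonal d * star U := hA.spectral_theorem
  -- trace (A * T) = ∑ d i * S i i
  have h1 : Matrix.trace (A * T) = ∑ i, d i * S i i := by
    rw [hspec, ← trace_diagonal_mul]
    rw [show U * Matrix.diagonal d * star U * T = U * (Matrix.diagonal d * (star U * T)) by
      noncomm_ring]
    rw [Matrix.trace_mul_comm, Matrix.mul_assoc, Matrix.mul_assoc]
    congr 1
    rw [hSdef]
    noncomm_ring
  set e : ι → ℂ := fun i => if 0 < hA.eigenvalues i then (1 : ℂ) else 0 with he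
  have h2 : Matrix.trace (A * specProj hA (fun x => 0 < x)) = ∑ i, d i * e i := by
    have hP : specProj hA (fun x => 0 < x) = U * Matrix.diagonal e * star U := by
      simp [specProj, he, hUdef]
    rw [hP, hspec]
    rw [show U * Matrix.diagonal d * star U * (U * Matrix.diagonal e * star U)
        = U * (Matrix.diagonal d * (star U * U) * Matrix.diagonal e * star U) by noncomm_ring,
      hU1, Matrix.mul_one, Matrix.trace_mul_comm]
    rw [Matrix.mul_assoc, hU1, Matrix.mul_one, Matrix.diagonal_mul_diagonal,
      Matrix.trace_diagonal]
  rw [h1, h2, Complex.re_sum, Complex.re_sum]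
  apply Finset.sum_le_sum
  intro i _
  have hsre : 0 ≤ (S i i).re := psd_diag_re_nonneg hS0 i
  have hsre1 : (S i i).re ≤ 1 := by
    have := psd_diag_re_nonneg hS1 i
    simp only [Matrix.sub_apply, Matrix.one_apply_eq, Complex.sub_re, Complex.one_re] at this
    linarith
  have hdre : (d i * S i i).re = hA.eigenvalues i * (S i i).re := by
    simp [hd, Complex.mul_re]
  rw [hdre]
  by_cases hpos : 0 < hA.eigenvalues i
  · have : (d i * e i).re = hA.eigenvalues i := by simp [hd, he, hpos]
    rw [this]
    nlinarith
  · have : (d i * e i).re = 0 := by simp [hd, he, hpos]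
    rw [this]
    push_neg at hpos
    nlinarith
end

section
/- Let ρ₀, ρ₁ be density operators and let α_β(ρ₀‖ρ₁) = inf over Hermitian T with 0 ≤ T ≤ I and tr(ρ₁ T) ≤ β of tr(ρ₀(I − T)). Then for every t ≥ 0, α_β(ρ₀‖ρ₁) ≥ tr(ρ₀ · {ρ₀ − t ρ₁ ≤ 0}) − t·β. -/
/-! For a test `0 ≤ T ≤ 1` and `P = {D ≤ 0}` with `D = ρ₀ - t ρ₁`, the projection `P`
minimises `S ↦ tr(D S)` over `0 ≤ S ≤ 1`: in an eigenbasis of `D` this is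
`∑ min(λᵢ, 0) ≤ ∑ λᵢ sᵢ` for `sᵢ ∈ [0, 1]`. Taking `S = 1 - T` and discarding
`t tr(ρ₁ (1 - P)) ≥ 0` gives
`tr(ρ₀ (1 - T)) ≥ tr(ρ₀ P) - t tr(ρ₁ T) ≥ tr(ρ₀ P) - t β`. -/

open Matrix
open scoped ComplexOrder

/-- Minimum type-I error `α_β(ρ₀‖ρ₁)` of a binary quantum hypothesis test. -/
noncomputable def alphaE {ι : Type*} [Fintype ι] [DecidableEq ι]
    (ρ₀ ρ₁ : Matrix ι ι ℂ) (β : ℝ) : ℝ :=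
  sInf {x : ℝ | ∃ T : Matrix ι ι ℂ, T.PosSemidef ∧ (1 - T).PosSemidef ∧
    (Matrix.trace (ρ₁ * T)).re ≤ β ∧ x = (Matrix.trace (ρ₀ * (1 - T))).re}

namespace Matrix

variable {ι 𝕜 : Type*} [Fintype ι] [DecidableEq ι] [RCLike 𝕜]

lemma IsHermitian.trace_mul_eq_sum_eigenvalues_mul {A : Matrix ι ι 𝕜} (hA : A.IsHermitian)
    (X : Matrix ι ι 𝕜) :
    (A * X).trace = ∑ i, (hA.eigenvalues i : 𝕜) *
      (star (hA.eigenvectorUnitary : Matrix ι ι 𝕜) * X * hA.eigenvectorUnitary) i i := by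
  conv_lhs => rw [hA.spectral_theorem, Unitary.conjStarAlgAut_apply]
  rw [mul_assoc, mul_assoc, trace_mul_comm, mul_assoc]
  simp [trace, diagonal_mul, mul_assoc]

lemma PosSemidef.re_trace_mul_nonneg {A B : Matrix ι ι 𝕜} (hA : A.PosSemidef)
    (hB : B.PosSemidef) : 0 ≤ RCLike.re (A * B).trace := by
  rw [trace_mul_comm, hB.1.trace_mul_eq_sum_eigenvalues_mul, map_sum]
  refine Finset.sum_nonneg fun i _ => ?_
  rw [RCLike.re_ofReal_mul]
  have hdiag := (hA.conjTranspose_mul_mul_same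
    (hB.1.eigenvectorUnitary : Matrix ι ι 𝕜)).diag_nonneg (i := i)
  exact mul_nonneg (hB.eigenvalues_nonneg i) (RCLike.nonneg_iff.mp hdiag).1

end Matrix

section specProj

variable {ι : Type*} [Fintype ι] [DecidableEq ι] {A : Matrix ι ι ℂ} (hA : A.IsHermitian)

lemma specProj_eq (p : ℝ → Prop) [DecidablePred p] :
    specProj hA p = (hA.eigenvectorUnitary : Matrix ι ι ℂ) *
      diagonal (fun i => if p (hA.eigenvalues i) then 1 else 0) *
      star (hA.eigenvectorUnitary : Matrix ι ι ℂ) := by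
  unfold specProj
  congr!

lemma star_eigenvectorUnitary_mul_specProj_mul (p : ℝ → Prop) [DecidablePred p] :
    star (hA.eigenvectorUnitary : Matrix ι ι ℂ) * specProj hA p *
      (hA.eigenvectorUnitary : Matrix ι ι ℂ) =
      diagonal (fun i => if p (hA.eigenvalues i) then 1 else 0) := by
  simp only [specProj_eq, ← mul_assoc, Unitary.coe_star_mul_self, one_mul]
  simp only [mul_assoc, Unitary.coe_star_mul_self, mul_one]

lemma specProj_posSemidef (p : ℝ → Prop) : (specProj hA p).PosSemidef := by
  classical
  rw [specProj_eq]
  refine (posSemidef_diagonal_iff.mpr fun i => ?_).mul_mul_conjTranspose_same _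
  split_ifs <;> simp

lemma one_sub_specProj (p : ℝ → Prop) : 1 - specProj hA p = specProj hA (fun x => ¬ p x) := by
  classical
  have hdiag : diagonal (fun i => if ¬ p (hA.eigenvalues i) then (1 : ℂ) else 0) =
      1 - diagonal (fun i => if p (hA.eigenvalues i) then 1 else 0) := by
    rw [← diagonal_one, diagonal_sub]
    congr 1
    funext i
    split_ifs <;> simp_all
  rw [specProj_eq, specProj_eq, hdiag, mul_sub, sub_mul, mul_one,
    Unitary.mul_star_self_of_mem hA.eigenvectorUnitary.2]

lemma re_trace_mul_specProj_nonpos_le {S : Matrix ι ι ℂ} (hS : S.PosSemidef)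
    (h1S : (1 - S).PosSemidef) :
    (A * specProj hA (· ≤ 0)).trace.re ≤ (A * S).trace.re := by
  classical
  set U : Matrix ι ι ℂ := (hA.eigenvectorUnitary : Matrix ι ι ℂ)
  rw [hA.trace_mul_eq_sum_eigenvalues_mul, hA.trace_mul_eq_sum_eigenvalues_mul,
    star_eigenvectorUnitary_mul_specProj_mul, Complex.re_sum, Complex.re_sum]
  refine Finset.sum_le_sum fun i _ => ?_
  have hs₀ : 0 ≤ ((star U * S * U) i i).re :=
    (Complex.nonneg_iff.mp (hS.conjTranspose_mul_mul_same U).diag_nonneg).1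
  have hs₁ : ((star U * S * U) i i).re ≤ 1 := by
    have h : star U * (1 - S) * U = 1 - star U * S * U := by
      rw [mul_sub, sub_mul, mul_one, Unitary.coe_star_mul_self]
    have hdiag :=
      (Complex.nonneg_iff.mp ((h1S.conjTranspose_mul_mul_same U).diag_nonneg (i := i))).1
    rw [← star_eq_conjTranspose, h, Matrix.sub_apply, one_apply_eq, Complex.sub_re] at hdiag
    simpa using hdiag
  rw [diagonal_apply_eq]
  split_ifs with h
  · simpa using mul_le_mul_of_nonpos_left hs₁ h
  · simpa using mul_nonneg (le_of_not_ge h) hs₀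

end specProj

lemma re_trace_mul_specProj_sub_le {ι : Type*} [Fintype ι] [DecidableEq ι]
    {ρ₀ ρ₁ T : Matrix ι ι ℂ} {t : ℝ} (h₁ : ρ₁.PosSemidef) (ht : 0 ≤ t)
    (hD : (ρ₀ - (t : ℂ) • ρ₁).IsHermitian) (hT : T.PosSemidef)
    (h1T : (1 - T).PosSemidef) :
    (ρ₀ * specProj hD (· ≤ 0)).trace.re - t * (ρ₁ * T).trace.re ≤
      (ρ₀ * (1 - T)).trace.re := by
  have hopt := re_trace_mul_specProj_nonpos_le hD h1T (by simpa using hT)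
  have hρ₁ : 0 ≤ (ρ₁ * (1 - specProj hD (· ≤ 0))).trace.re :=
    h₁.re_trace_mul_nonneg (by rw [one_sub_specProj]; exact specProj_posSemidef hD _)
  simp only [sub_mul, mul_sub, smul_mul_assoc, mul_one, trace_sub, trace_smul, smul_eq_mul,
    Complex.sub_re, Complex.re_ofReal_mul] at hopt hρ₁ ⊢
  linarith [mul_nonneg ht hρ₁]

theorem alphaE_ge_trace_nonposProj_general {ι : Type*} [Fintype ι] [DecidableEq ι]
    {ρ₀ ρ₁ : Matrix ι ι ℂ}
    (h₁ : ρ₁.PosSemidef)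
    {β : ℝ} (hβ : β ∈ Set.Icc (0 : ℝ) 1) {t : ℝ} (ht : 0 ≤ t)
    (hD : (ρ₀ - (t : ℂ) • ρ₁).IsHermitian) :
    alphaE ρ₀ ρ₁ β ≥
      (Matrix.trace (ρ₀ * specProj hD (fun x => x ≤ 0))).re - t * β := by
  refine le_csInf ⟨_, 0, .zero, by simpa using .one, by simpa using hβ.1, rfl⟩ ?_
  rintro _ ⟨T, hT, h1T, hTβ, rfl⟩
  linarith [re_trace_mul_specProj_sub_le h₁ ht hD hT h1T, mul_le_mul_of_nonneg_left hTβ ht]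

/-- lower bound on the minimum type-I error of a binary test
(Lemma 2): `α_β(ρ₀‖ρ₁) ≥ tr(ρ₀ · {ρ₀ − t ρ₁ ≤ 0}) − t·β`. -/
theorem alphaE_ge_trace_nonposProj {ι : Type*} [Fintype ι] [DecidableEq ι]
    {ρ₀ ρ₁ : Matrix ι ι ℂ}
    (h₀ : ρ₀.PosSemidef) (h₀t : ρ₀.trace = 1)
    (h₁ : ρ₁.PosSemidef) (h₁t : ρ₁.trace = 1)
    {β : ℝ} (hβ : β ∈ Set.Icc (0 : ℝ) 1) {t : ℝ} (ht : 0 ≤ t)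
    (hD : (ρ₀ - (t : ℂ) • ρ₁).IsHermitian) :
    alphaE ρ₀ ρ₁ β ≥
      (Matrix.trace (ρ₀ * specProj hD (fun x => x ≤ 0))).re - t * β :=
  alphaE_ge_trace_nonposProj_general h₁ hβ ht hD
end

section
/- Let ρ₀, ρ₁ be density matrices, t ≥ 0, and let T = P⁺_t + p⁰ where P⁺_t = {ρ₀ − tρ₁ > 0} and 0 ≤ p⁰ ≤ P⁰_t (the null-space projection of ρ₀ − tρ₁). Then for any Hermitian T' with 0 ≤ T' ≤ I, we have tr(ρ₀(I − T)) + t·tr(ρ₁ T) ≤ tr(ρ₀(I − T')) + t·tr(ρ₁ T'). -/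
open Matrix
open scoped ComplexOrder

private lemma np_diag_nonneg {ι : Type*} [Fintype ι] [DecidableEq ι]
    {M : Matrix ι ι ℂ} (hM : M.PosSemidef) (i : ι) : 0 ≤ M i i := by
  exact hM.diag_nonneg

private lemma np_key {ι : Type*} [Fintype ι] [DecidableEq ι]
    {D : Matrix ι ι ℂ} (hD : D.IsHermitian)
    {p0 : Matrix ι ι ℂ} (hp₀ : p0.PosSemidef)
    (hp₁ : ((1 - specProj hD (fun x => 0 < x) - specProj hD (fun x => x < 0))
      - p0).PosSemidef)
    {T' : Matrix ι ι ℂ} (hT'₀ : T'.PosSemidef) (hT'₁ : (1 - T').PosSemidef) :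
    (Matrix.trace (D * T')).re
      ≤ (Matrix.trace (D * (specProj hD (fun x => 0 < x) + p0))).re := by
  classical
  set U : Matrix ι ι ℂ := (hD.eigenvectorUnitary : Matrix ι ι ℂ) with hUdef
  set lam : ι → ℝ := hD.eigenvalues with hlam
  have hUU : star U * U = 1 := Matrix.mem_unitaryGroup_iff'.mp hD.eigenvectorUnitary.2
  -- trace formula
  have key : ∀ X : Matrix ι ι ℂ,
      Matrix.trace (D * X) = ∑ i, (lam i : ℂ) * ((star U * X * U) i i) := by
    intro X
    have h1 : D * X = U * ((Matrix.diagonal (RCLike.ofReal ∘ lam)) * (star U * X)) := by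
      conv_lhs => rw [hD.spectral_theorem]
      simp only [Unitary.conjStarAlgAut_apply, Unitary.coe_star, mul_assoc]
      rfl
    rw [h1, Matrix.trace_mul_comm, mul_assoc]
    simp [Matrix.trace, Matrix.diag, Matrix.diagonal_mul]
  -- unfolding of specProj
  have hsd : ∀ (pred : ℝ → Prop),
      specProj hD pred
        = U * Matrix.diagonal (fun i => if pred (lam i) then (1 : ℂ) else 0) * star U :=
    fun _ => rfl
  -- conjugation of spectral projections
  have hsp : ∀ (pred : ℝ → Prop),
      star U * specProj hD pred * U
        = Matrix.diagonal (fun i => if pred (lam i) then (1 : ℂ) else 0) := by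
    intro pred
    rw [hsd pred]
    have h2 : star U *
          (U * Matrix.diagonal (fun i => if pred (lam i) then (1 : ℂ) else 0) * star U) * U
        = (star U * U) *
          Matrix.diagonal (fun i => if pred (lam i) then (1 : ℂ) else 0) * (star U * U) := by
      noncomm_ring
    rw [h2, hUU, one_mul, mul_one]
  have hQpsd : (star U * p0 * U).PosSemidef := hp₀.conjTranspose_mul_mul_same U
  have hMpsd : (star U * T' * U).PosSemidef := hT'₀.conjTranspose_mul_mul_same U
  have hM1psd : (1 - star U * T' * U).PosSemidef := by
    have h3 : (1 : Matrix ι ι ℂ) - star U * T' * U = star U * (1 - T') * U := by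
      rw [mul_sub, sub_mul, mul_one, hUU]
    rw [h3]; exact hT'₁.conjTranspose_mul_mul_same U
  -- p0's conjugation vanishes on the non-null diagonal
  have hQ0 : ∀ i, lam i ≠ 0 → (star U * p0 * U) i i = 0 := by
    intro i hi
    have h4 : (1 : Matrix ι ι ℂ)
          - Matrix.diagonal (fun i => if 0 < lam i then (1 : ℂ) else 0)
          - Matrix.diagonal (fun i => if lam i < 0 then (1 : ℂ) else 0)
          - star U * p0 * U
        = star U * ((1 - specProj hD (fun x => 0 < x) - specProj hD (fun x => x < 0))
            - p0) * U := by
      rw [mul_sub, sub_mul, mul_sub, sub_mul, mul_sub, sub_mul, mul_one, hUU,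
        hsp (fun x => 0 < x), hsp (fun x => x < 0)]
    have hpsd : ((1 : Matrix ι ι ℂ)
          - Matrix.diagonal (fun i => if 0 < lam i then (1 : ℂ) else 0)
          - Matrix.diagonal (fun i => if lam i < 0 then (1 : ℂ) else 0)
          - star U * p0 * U).PosSemidef := by
      rw [h4]; exact hp₁.conjTranspose_mul_mul_same U
    have h5 := np_diag_nonneg hpsd i
    have h6 : ((1 : Matrix ι ι ℂ)
          - Matrix.diagonal (fun i => if 0 < lam i then (1 : ℂ) else 0)
          - Matrix.diagonal (fun i => if lam i < 0 then (1 : ℂ) else 0)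
          - star U * p0 * U) i i = - (star U * p0 * U) i i := by
      rcases lt_or_gt_of_ne hi with h | h
      · simp [Matrix.sub_apply, Matrix.one_apply_eq, Matrix.diagonal_apply_eq, h, asymm h]
      · simp [Matrix.sub_apply, Matrix.one_apply_eq, Matrix.diagonal_apply_eq, h, asymm h]
    rw [h6] at h5
    exact le_antisymm (neg_nonneg.mp h5) (np_diag_nonneg hQpsd i)
  -- trace of D against the NP test
  have hDP : Matrix.trace (D * specProj hD (fun x => 0 < x))
      = ∑ i, if 0 < lam i then (lam i : ℂ) else 0 := by
    rw [key]
    refine Finset.sum_congr rfl fun i _ => ?_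
    rw [hsp, Matrix.diagonal_apply_eq]
    split_ifs <;> simp
  have hDp0 : Matrix.trace (D * p0) = 0 := by
    rw [key]
    refine Finset.sum_eq_zero fun i _ => ?_
    by_cases h : lam i = 0
    · simp [h]
    · rw [hQ0 i h, mul_zero]
  have hT : (Matrix.trace (D * (specProj hD (fun x => 0 < x) + p0))).re
      = ∑ i, if 0 < lam i then lam i else 0 := by
    rw [mul_add, Matrix.trace_add, hDp0, add_zero, hDP, Complex.re_sum]
    exact Finset.sum_congr rfl fun i _ => by split_ifs <;> simp
  have hT'v : (Matrix.trace (D * T')).re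
      = ∑ i, lam i * ((star U * T' * U) i i).re := by
    rw [key, Complex.re_sum]
    exact Finset.sum_congr rfl fun i _ => Complex.re_ofReal_mul _ _
  rw [hT, hT'v]
  refine Finset.sum_le_sum fun i _ => ?_
  have hm1 : 0 ≤ ((star U * T' * U) i i).re := by
    have := (Complex.le_def.mp (np_diag_nonneg hMpsd i)).1
    simpa using this
  have hm2 : ((star U * T' * U) i i).re ≤ 1 := by
    have h7 := (Complex.le_def.mp (np_diag_nonneg hM1psd i)).1
    have h8 : ((1 - star U * T' * U) i i) = 1 - (star U * T' * U) i i := by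
      simp [Matrix.sub_apply, Matrix.one_apply_eq]
    rw [h8] at h7
    simp only [Complex.sub_re, Complex.one_re, Complex.zero_re] at h7
    linarith
  split_ifs with h
  · nlinarith
  · push_neg at h
    nlinarith

/-- the Neyman–Pearson test `T = P⁺_t + p0` minimizes the
Lagrangian `tr(ρ₀(I − T)) + t·tr(ρ₁ T)` over all tests `0 ≤ T' ≤ I`. -/
theorem neymanPearson_minimizes_lagrangian {ι : Type*} [Fintype ι] [DecidableEq ι]
    {ρ₀ ρ₁ : Matrix ι ι ℂ}
    (h₀ : ρ₀.PosSemidef) (h₀t : ρ₀.trace = 1)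
    (h₁ : ρ₁.PosSemidef) (h₁t : ρ₁.trace = 1)
    {t : ℝ} (ht : 0 ≤ t) (hD : (ρ₀ - (t : ℂ) • ρ₁).IsHermitian)
    {p0 : Matrix ι ι ℂ} (hp₀ : p0.PosSemidef)
    (hp₁ : ((1 - specProj hD (fun x => 0 < x) - specProj hD (fun x => x < 0))
      - p0).PosSemidef)
    {T' : Matrix ι ι ℂ} (hT'₀ : T'.PosSemidef) (hT'₁ : (1 - T').PosSemidef) :
    (Matrix.trace (ρ₀ * (1 - (specProj hD (fun x => 0 < x) + p0)))).re
      + t * (Matrix.trace (ρ₁ * (specProj hD (fun x => 0 < x) + p0))).re ≤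
    (Matrix.trace (ρ₀ * (1 - T'))).re + t * (Matrix.trace (ρ₁ * T')).re := by
  have expand : ∀ X : Matrix ι ι ℂ,
      (Matrix.trace (ρ₀ * (1 - X))).re + t * (Matrix.trace (ρ₁ * X)).re
        = (Matrix.trace ρ₀).re - (Matrix.trace ((ρ₀ - (t : ℂ) • ρ₁) * X)).re := by
    intro X
    rw [mul_sub, mul_one, sub_mul, Matrix.smul_mul, Matrix.trace_sub, Matrix.trace_sub,
      Matrix.trace_smul]
    simp only [Complex.sub_re, smul_eq_mul, Complex.re_ofReal_mul]
    ring
  rw [expand, expand]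
  have := np_key hD hp₀ hp₁ hT'₀ hT'₁
  linarith
end

section
/- Let τ₁,…,τ_M be density matrices with prior probabilities p₁,…,p_M, and let ε = min over POVMs {Π₁,…,Π_M} of 1 − Σᵢ pᵢ tr(τᵢ Πᵢ). For any density matrix μ₀, letting 𝒯 = diag(p₁τ₁,…,p_Mτ_M) and 𝒟 = diag(μ₀/M,…,μ₀/M), we have ε ≥ α_{1/M}(𝒯‖𝒟). -/
open Matrix
open scoped ComplexOrder

/-!
The block-diagonal test `T = diag(Π₁, …, Π_M)` built from the POVM is admissible for
`α_{1/M}(𝒯‖𝒟)`: `tr(𝒟 T) = tr(μ₀ ∑ Πᵢ) / M = 1 / M`, while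
`tr(𝒯 (I - T)) = ∑ pᵢ tr(τᵢ (I - Πᵢ)) = 1 - ∑ pᵢ tr(τᵢ Πᵢ)` is exactly the error of the POVM.
-/

namespace Matrix

variable {𝕜 ι : Type*} [RCLike 𝕜] [Fintype ι] [DecidableEq ι]

open scoped MatrixOrder in
lemma PosSemidef.exists_eq_conjTranspose_mul_self {A : Matrix ι ι 𝕜} (hA : A.PosSemidef) :
    ∃ B : Matrix ι ι 𝕜, A = Bᴴ * B :=
  CStarAlgebra.nonneg_iff_eq_star_mul_self.mp hA.nonneg

lemma PosSemidef.trace_mul_nonneg {A B : Matrix ι ι 𝕜} (hA : A.PosSemidef)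
    (hB : B.PosSemidef) : 0 ≤ (A * B).trace := by
  obtain ⟨C, rfl⟩ := hA.exists_eq_conjTranspose_mul_self
  rw [← trace_mul_cycle]
  exact (hB.mul_mul_conjTranspose_same C).trace_nonneg

lemma PosSemidef.blockDiagonal {o : Type*} [Fintype o] [DecidableEq o]
    {f : o → Matrix ι ι 𝕜} (hf : ∀ i, (f i).PosSemidef) :
    (blockDiagonal f).PosSemidef := by
  choose B hB using fun i => (hf i).exists_eq_conjTranspose_mul_self
  rw [funext hB, blockDiagonal_mul, ← blockDiagonal_conjTranspose]
  exact posSemidef_conjTranspose_mul_self _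

end Matrix

lemma Matrix.posSemidef_one_sub_of_sum_eq_one {R ι κ : Type*} [Ring R] [PartialOrder R]
    [StarRing R] [AddLeftMono R] [Fintype ι] [DecidableEq ι] [Fintype κ] [DecidableEq κ]
    {E : κ → Matrix ι ι R} (hE : ∀ k, (E k).PosSemidef) (hE1 : ∑ k, E k = 1) (k : κ) :
    (1 - E k).PosSemidef := by
  rw [← hE1, ← Finset.add_sum_erase _ _ (Finset.mem_univ k), add_sub_cancel_left]
  exact posSemidef_sum _ fun j _ => hE j

lemma alphaE_le {ι : Type*} [Fintype ι] [DecidableEq ι] {ρ₀ ρ₁ T : Matrix ι ι ℂ} {β : ℝ}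
    (hρ₀ : ρ₀.PosSemidef) (hT : T.PosSemidef) (hT1 : (1 - T).PosSemidef)
    (hβ : (ρ₁ * T).trace.re ≤ β) : alphaE ρ₀ ρ₁ β ≤ (ρ₀ * (1 - T)).trace.re := by
  refine csInf_le ⟨0, ?_⟩ ⟨T, hT, hT1, hβ, rfl⟩
  rintro _ ⟨S, -, hS1, -, rfl⟩
  exact (Complex.nonneg_iff.mp (hρ₀.trace_mul_nonneg hS1)).1

theorem mary_error_ge_alpha_general {n M : ℕ}
    {τ : Fin M → Matrix (Fin n) (Fin n) ℂ}
    (hτ : ∀ i, (τ i).PosSemidef) (hτt : ∀ i, (τ i).trace = 1)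
    {p : Fin M → ℝ} (hp : ∀ i, 0 ≤ p i) (hp1 : ∑ i, p i = 1)
    {μ₀ : Matrix (Fin n) (Fin n) ℂ} (hμt : μ₀.trace = 1)
    {E : Fin M → Matrix (Fin n) (Fin n) ℂ}
    (hE : ∀ i, (E i).PosSemidef) (hE1 : ∑ i, E i = 1) :
    1 - ∑ i, p i * (Matrix.trace (τ i * E i)).re ≥
      alphaE (Matrix.blockDiagonal (fun i => (p i : ℂ) • τ i))
        (Matrix.blockDiagonal (fun _ : Fin M => ((M : ℂ))⁻¹ • μ₀))
        (1 / M) := by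
  have hsub : 1 - blockDiagonal E = blockDiagonal (1 - E) := by
    rw [blockDiagonal_sub, blockDiagonal_one]
  have hβ : (blockDiagonal (fun _ : Fin M => (M : ℂ)⁻¹ • μ₀) * blockDiagonal E).trace.re
      = 1 / M := by
    rw [← blockDiagonal_mul, trace_blockDiagonal]
    simp_rw [smul_mul, trace_smul, smul_eq_mul, ← Finset.mul_sum, ← trace_sum,
      ← Matrix.mul_sum, hE1, Matrix.mul_one, hμt]
    simp
  have herr : (blockDiagonal (fun i => (p i : ℂ) • τ i) * (1 - blockDiagonal E)).trace.re
      = 1 - ∑ i, p i * (τ i * E i).trace.re := by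
    rw [hsub, ← blockDiagonal_mul, trace_blockDiagonal]
    simp_rw [Pi.sub_apply, Pi.one_apply, smul_mul, mul_sub, mul_one, trace_smul, trace_sub, hτt,
      smul_eq_mul]
    simp [Complex.re_sum, mul_sub, Finset.sum_sub_distrib, hp1]
  have hT1 : (1 - blockDiagonal E).PosSemidef := by
    rw [hsub]
    exact PosSemidef.blockDiagonal (posSemidef_one_sub_of_sum_eq_one hE hE1)
  have h𝒯 : (blockDiagonal fun i => (p i : ℂ) • τ i).PosSemidef :=
    PosSemidef.blockDiagonal fun i => (hτ i).smul (Complex.zero_le_real.mpr (hp i))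
  exact (alphaE_le h𝒯 (PosSemidef.blockDiagonal hE) hT1 hβ.le).trans_eq herr

/-- lower-bound direction of Theorem 1: for any POVM and any
density matrix `μ₀`, the average error probability of the M-ary test is at
least `α_{1/M}(𝒯‖𝒟(μ₀))`. -/
theorem mary_error_ge_alpha {n M : ℕ}
    {τ : Fin M → Matrix (Fin n) (Fin n) ℂ}
    (hτ : ∀ i, (τ i).PosSemidef) (hτt : ∀ i, (τ i).trace = 1)
    {p : Fin M → ℝ} (hp : ∀ i, 0 ≤ p i) (hp1 : ∑ i, p i = 1)
    {μ₀ : Matrix (Fin n) (Fin n) ℂ} (hμ : μ₀.PosSemidef) (hμt : μ₀.trace = 1)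
    {E : Fin M → Matrix (Fin n) (Fin n) ℂ}
    (hE : ∀ i, (E i).PosSemidef) (hE1 : ∑ i, E i = 1) :
    1 - ∑ i, p i * (Matrix.trace (τ i * E i)).re ≥
      alphaE (Matrix.blockDiagonal (fun i => (p i : ℂ) • τ i))
        (Matrix.blockDiagonal (fun _ : Fin M => ((M : ℂ))⁻¹ • μ₀))
        (1 / M) :=
  mary_error_ge_alpha_general hτ hτt hp hp1 hμt hE hE1
end

section
/- Let τ₁,…,τ_M be density matrices with priors p₁,…,p_M and minimum average error probability ε over all POVMs. Then for every density matrix μ₀ and every t ≥ 0, ε ≥ Σᵢ pᵢ tr(τᵢ · {pᵢτᵢ − tμ₀ ≤ 0}) − t. -/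
open Matrix
open scoped ComplexOrder

namespace Matrix

variable {ι κ : Type*}

lemma trace_mul_conj_diagonal [Fintype ι] [DecidableEq ι] (B U : Matrix ι ι ℂ) (d : ι → ℂ) :
    trace (B * (U * diagonal d * star U)) = ∑ i, d i * (star U * B * U) i i := by
  rw [show B * (U * diagonal d * star U) = B * U * diagonal d * star U by
      simp only [Matrix.mul_assoc], trace_mul_comm, ← Matrix.mul_assoc, ← Matrix.mul_assoc]
  simp [trace, mul_diagonal, mul_comm]

lemma posSemidef_one_sub_of_sum_eq_one_s9 [DecidableEq ι] [Fintype κ] {E : κ → Matrix ι ι ℂ}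
    (hE : ∀ k, (E k).PosSemidef) (hE1 : ∑ k, E k = 1) (k : κ) : (1 - E k).PosSemidef := by
  classical
  rw [← hE1, ← Finset.add_sum_erase _ E (Finset.mem_univ k), add_sub_cancel_left]
  exact posSemidef_sum _ fun j _ => hE j

lemma PosSemidef.re_diag_nonneg {B : Matrix ι ι ℂ} (hB : B.PosSemidef) (i : ι) :
    0 ≤ (B i i).re :=
  (Complex.le_def.mp hB.diag_nonneg).1

namespace IsHermitian

variable [Fintype ι] [DecidableEq ι]
variable {A : Matrix ι ι ℂ} (hA : A.IsHermitian)

lemma star_eigenvectorUnitary_mul_mul_self :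
    star (hA.eigenvectorUnitary : Matrix ι ι ℂ) * A * (hA.eigenvectorUnitary : Matrix ι ι ℂ) =
      diagonal (fun i => (hA.eigenvalues i : ℂ)) := by
  simpa [Function.comp_def] using hA.conjStarAlgAut_star_eigenvectorUnitary

lemma trace_mul_eq_sum_eigenvalues (Q : Matrix ι ι ℂ) :
    trace (A * Q) = ∑ i, (hA.eigenvalues i : ℂ) *
      (star (hA.eigenvectorUnitary : Matrix ι ι ℂ) * Q *
        (hA.eigenvectorUnitary : Matrix ι ι ℂ)) i i := by
  rw [trace_mul_comm]
  conv_lhs => rw [hA.spectral_theorem, Unitary.conjStarAlgAut_apply]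
  exact trace_mul_conj_diagonal _ _ _

end IsHermitian

end Matrix

section
variable {ι : Type*} [Fintype ι] [DecidableEq ι] {A : Matrix ι ι ℂ} (hA : A.IsHermitian)

open Classical in
lemma trace_mul_specProj (pred : ℝ → Prop) (B : Matrix ι ι ℂ) :
    trace (B * specProj hA pred) = ∑ i, if pred (hA.eigenvalues i) then
      (star (hA.eigenvectorUnitary : Matrix ι ι ℂ) * B * (hA.eigenvectorUnitary : Matrix ι ι ℂ))
        i i else 0 := by
  rw [specProj, trace_mul_conj_diagonal]
  simp only [ite_mul, one_mul, zero_mul]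

lemma re_trace_mul_specProj_le {μ : Matrix ι ι ℂ} (hμ : μ.PosSemidef) (pred : ℝ → Prop) :
    (trace (μ * specProj hA pred)).re ≤ (trace μ).re := by
  classical
  set U : Matrix ι ι ℂ := ↑hA.eigenvectorUnitary
  have hconj : trace μ = trace (star U * μ * U) := by
    rw [trace_mul_cycle, mem_unitaryGroup_iff.mp hA.eigenvectorUnitary.2, one_mul]
  rw [trace_mul_specProj, hconj, trace, Complex.re_sum, Complex.re_sum]
  refine Finset.sum_le_sum fun i _ => ?_
  split_ifs
  · rfl
  · exact (hμ.conjTranspose_mul_mul_same U).re_diag_nonneg i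

lemma re_trace_mul_specProj_nonpos_le_s9 {Q : Matrix ι ι ℂ} (hQ : Q.PosSemidef)
    (hQ1 : (1 - Q).PosSemidef) :
    (trace (A * specProj hA (· ≤ 0))).re ≤ (trace (A * Q)).re := by
  have hU := hA.eigenvectorUnitary.2
  have hC := hQ.conjTranspose_mul_mul_same (hA.eigenvectorUnitary : Matrix ι ι ℂ)
  have hC1 := hQ1.conjTranspose_mul_mul_same (hA.eigenvectorUnitary : Matrix ι ι ℂ)
  rw [trace_mul_specProj, hA.star_eigenvectorUnitary_mul_mul_self,
    hA.trace_mul_eq_sum_eigenvalues, Complex.re_sum, Complex.re_sum]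
  rw [← star_eq_conjTranspose] at hC hC1
  rw [Matrix.mul_sub, Matrix.sub_mul, mul_one, mem_unitaryGroup_iff'.mp hU] at hC1
  generalize star (hA.eigenvectorUnitary : Matrix ι ι ℂ) * Q *
    (hA.eigenvectorUnitary : Matrix ι ι ℂ) = C at *
  refine Finset.sum_le_sum fun i _ => ?_
  have hCii_nonneg := hC.re_diag_nonneg i
  have hCii_le_one : (C i i).re ≤ 1 := by simpa using hC1.re_diag_nonneg i
  simp only [diagonal_apply_eq, Complex.re_ofReal_mul]
  split_ifs with h
  · rw [Complex.ofReal_re]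
    nlinarith
  · rw [Complex.zero_re]
    nlinarith

end

lemma mul_re_trace_mul_specProj_le {ι : Type*} [Fintype ι] [DecidableEq ι]
    {τ μ E : Matrix ι ι ℂ} {p t : ℝ} (hμ : μ.PosSemidef) (hμt : μ.trace = 1) (ht : 0 ≤ t)
    (hH : ((p : ℂ) • τ - (t : ℂ) • μ).IsHermitian) (hE : E.PosSemidef)
    (hE1 : (1 - E).PosSemidef) :
    p * (trace (τ * specProj hH (· ≤ 0))).re ≤
      p * (trace (τ * (1 - E))).re + t * (trace (μ * E)).re := by
  have hmin := re_trace_mul_specProj_nonpos_le_s9 hH hE1 (by simpa using hE)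
  have hμP := re_trace_mul_specProj_le hH hμ (· ≤ 0)
  have hμE : (trace (μ * (1 - E))).re = 1 - (trace (μ * E)).re := by
    rw [mul_sub, mul_one, trace_sub, hμt, Complex.sub_re, Complex.one_re]
  simp only [sub_mul, smul_mul, trace_sub, trace_smul, smul_eq_mul, Complex.sub_re,
    Complex.re_ofReal_mul, hμE] at hmin
  rw [hμt, Complex.one_re] at hμP
  nlinarith [mul_nonneg ht (sub_nonneg.2 hμP)]

theorem mary_error_ge_spectrum_general {n M : ℕ}
    {τ : Fin M → Matrix (Fin n) (Fin n) ℂ}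
    (hτt : ∀ i, (τ i).trace = 1)
    {p : Fin M → ℝ} (hp1 : ∑ i, p i = 1)
    {μ₀ : Matrix (Fin n) (Fin n) ℂ} (hμ : μ₀.PosSemidef) (hμt : μ₀.trace = 1)
    {t : ℝ} (ht : 0 ≤ t)
    (hH : ∀ i, ((p i : ℂ) • τ i - (t : ℂ) • μ₀).IsHermitian)
    {E : Fin M → Matrix (Fin n) (Fin n) ℂ}
    (hE : ∀ i, (E i).PosSemidef) (hE1 : ∑ i, E i = 1) :
    1 - ∑ i, p i * (Matrix.trace (τ i * E i)).re ≥
      (∑ i, p i * (Matrix.trace (τ i * specProj (hH i) (fun x => x ≤ 0))).re)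
        - t := by
  have hμE : ∑ i, (trace (μ₀ * E i)).re = 1 := by
    rw [← Complex.re_sum, ← trace_sum, ← Finset.mul_sum, hE1, mul_one, hμt, Complex.one_re]
  have hτE : ∀ i, (trace (τ i * (1 - E i))).re = 1 - (trace (τ i * E i)).re := fun i => by
    rw [mul_sub, mul_one, trace_sub, hτt, Complex.sub_re, Complex.one_re]
  calc ∑ i, p i * (trace (τ i * specProj (hH i) fun x => x ≤ 0)).re - t
      ≤ ∑ i, (p i * (trace (τ i * (1 - E i))).re + t * (trace (μ₀ * E i)).re) - t := by
        gcongr with i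
        exact mul_re_trace_mul_specProj_le hμ hμt ht (hH i) (hE i)
          (posSemidef_one_sub_of_sum_eq_one_s9 hE hE1 i)
    _ = 1 - ∑ i, p i * (trace (τ i * E i)).re := by
        simp only [hτE]
        simp only [mul_sub, mul_one]
        rw [Finset.sum_add_distrib, Finset.sum_sub_distrib, ← Finset.mul_sum, hμE, hp1]
        ring

/-- lower-bound direction of Theorem 2: for every POVM, every
density matrix `μ₀` and every `t ≥ 0`,
`1 − Σᵢ pᵢ tr(τᵢ Eᵢ) ≥ Σᵢ pᵢ tr(τᵢ · {pᵢτᵢ − tμ₀ ≤ 0}) − t`. -/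
theorem mary_error_ge_spectrum {n M : ℕ}
    {τ : Fin M → Matrix (Fin n) (Fin n) ℂ}
    (hτ : ∀ i, (τ i).PosSemidef) (hτt : ∀ i, (τ i).trace = 1)
    {p : Fin M → ℝ} (hp : ∀ i, 0 ≤ p i) (hp1 : ∑ i, p i = 1)
    {μ₀ : Matrix (Fin n) (Fin n) ℂ} (hμ : μ₀.PosSemidef) (hμt : μ₀.trace = 1)
    {t : ℝ} (ht : 0 ≤ t)
    (hH : ∀ i, ((p i : ℂ) • τ i - (t : ℂ) • μ₀).IsHermitian)
    {E : Fin M → Matrix (Fin n) (Fin n) ℂ}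
    (hE : ∀ i, (E i).PosSemidef) (hE1 : ∑ i, E i = 1) :
    1 - ∑ i, p i * (Matrix.trace (τ i * E i)).re ≥
      (∑ i, p i * (Matrix.trace (τ i * specProj (hH i) (fun x => x ≤ 0))).re)
        - t :=
  mary_error_ge_spectrum_general hτt hp1 hμ hμt ht hH hE hE1
end

section
/- Suppose a POVM {Π₁*,…,Π_M*} satisfies the Holevo–Yuen–Kennedy–Lax conditions: Λ := Σᵢ pᵢτᵢΠᵢ* is Hermitian, (Λ − p_mτ_m)Π_m* = 0 and Λ − p_mτ_m ≥ 0 for all m. Then with μ₀* = Λ/tr(Λ) and t = tr(Λ), the projection {pᵢτᵢ − tμ₀* ≤ 0} equals the identity for every i, and consequently Σᵢ pᵢ tr(τᵢ{pᵢτᵢ − tμ₀* ≤ 0}) − t = 1 − Σᵢ pᵢ tr(τᵢΠᵢ*). -/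
/-! The HYKL condition `Λ - pᵢτᵢ ≥ 0` says that `pᵢτᵢ - tμ₀* = pᵢτᵢ - Λ` has no positive
eigenvalue, so the projection `{pᵢτᵢ - tμ₀* ≤ 0}` is the whole space; the lower bound then
collapses to `∑ pᵢ tr τᵢ - tr Λ`, and `tr Λ` is the success probability of the POVM. -/

open Matrix
open scoped ComplexOrder

namespace Matrix.IsHermitian

variable {ι : Type*} [Fintype ι] [DecidableEq ι] {A : Matrix ι ι ℂ}

lemma eigenvalues_nonpos_of_posSemidef_neg (hA : A.IsHermitian) (h : (-A).PosSemidef) (j : ι) :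
    hA.eigenvalues j ≤ 0 := by
  have hquad := h.re_dotProduct_nonneg (WithLp.equiv 2 _ (hA.eigenvectorBasis j))
  rw [neg_mulVec, dotProduct_neg, map_neg] at hquad
  rw [hA.eigenvalues_eq]
  exact neg_nonneg.mp hquad

lemma specProj_eq_one_of_forall (hA : A.IsHermitian) {pred : ℝ → Prop}
    (h : ∀ j, pred (hA.eigenvalues j)) : specProj hA pred = 1 := by
  have hdiag : (diagonal fun j => letI := Classical.decPred pred
      if pred (hA.eigenvalues j) then (1 : ℂ) else 0) = 1 := by
    simp only [h, if_true, diagonal_one]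
  rw [specProj, hdiag, mul_one]
  exact mem_unitaryGroup_iff.mp hA.eigenvectorUnitary.2

lemma specProj_nonpos_eq_one (hA : A.IsHermitian) (h : (-A).PosSemidef) :
    specProj hA (fun x => x ≤ 0) = 1 :=
  hA.specProj_eq_one_of_forall (hA.eigenvalues_nonpos_of_posSemidef_neg h)

end Matrix.IsHermitian

lemma re_trace_sum_smul_mul {ι m : Type*} [Fintype ι] [Fintype m] (p : ι → ℝ)
    (A B : ι → Matrix m m ℂ) :
    (trace (∑ i, (p i : ℂ) • (A i * B i))).re = ∑ i, p i * (trace (A i * B i)).re := by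
  simp only [trace_sum, trace_smul, Complex.re_sum, smul_eq_mul, Complex.re_ofReal_mul]

theorem hykl_spectrum_equality_general {n M : ℕ}
    {τ : Fin M → Matrix (Fin n) (Fin n) ℂ}
    (hτt : ∀ i, (τ i).trace = 1)
    {p : Fin M → ℝ} (hp1 : ∑ i, p i = 1)
    {E : Fin M → Matrix (Fin n) (Fin n) ℂ}
    {Λ : Matrix (Fin n) (Fin n) ℂ}
    (hΛdef : Λ = ∑ i, (p i : ℂ) • (τ i * E i))
    (hΛtr : 0 < Λ.trace.re)
    (hopt1 : ∀ m, (Λ - (p m : ℂ) • τ m).PosSemidef)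
    (hH : ∀ i, ((p i : ℂ) • τ i - Λ.trace • (Λ.trace⁻¹ • Λ)).IsHermitian) :
    (∀ i, specProj (hH i) (fun x => x ≤ 0) = 1) ∧
    (∑ i, p i * (Matrix.trace (τ i * specProj (hH i) (fun x => x ≤ 0))).re)
        - Λ.trace.re =
      1 - ∑ i, p i * (Matrix.trace (τ i * E i)).re := by
  have htr : Λ.trace ≠ 0 := fun h => by simp [h] at hΛtr
  have hproj : ∀ i, specProj (hH i) (fun x => x ≤ 0) = 1 := fun i => by
    refine (hH i).specProj_nonpos_eq_one ?_
    rw [smul_smul, mul_inv_cancel₀ htr, one_smul, neg_sub]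
    exact hopt1 i
  refine ⟨hproj, ?_⟩
  have hsum : ∑ i, p i * (trace (τ i * specProj (hH i) (fun x => x ≤ 0))).re = 1 := by
    simp only [hproj, mul_one, hτt, Complex.one_re, hp1]
  rw [hsum, hΛdef, re_trace_sum_smul_mul]

/-- under the Holevo–Yuen–Kennedy–Lax optimality conditions,
with `μ₀* = Λ/tr(Λ)` and `t = tr(Λ)`, the projection
`{pᵢτᵢ − tμ₀* ≤ 0}` is the identity for every `i`, and the
information-spectrum lower bound is met with equality. -/
theorem hykl_spectrum_equality {n M : ℕ}
    {τ : Fin M → Matrix (Fin n) (Fin n) ℂ}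
    (hτ : ∀ i, (τ i).PosSemidef) (hτt : ∀ i, (τ i).trace = 1)
    {p : Fin M → ℝ} (hp : ∀ i, 0 ≤ p i) (hp1 : ∑ i, p i = 1)
    {E : Fin M → Matrix (Fin n) (Fin n) ℂ}
    (hE : ∀ i, (E i).PosSemidef) (hE1 : ∑ i, E i = 1)
    {Λ : Matrix (Fin n) (Fin n) ℂ}
    (hΛdef : Λ = ∑ i, (p i : ℂ) • (τ i * E i))
    (hΛ : Λ.IsHermitian) (hΛtr : 0 < Λ.trace.re)
    (hopt0 : ∀ m, (Λ - (p m : ℂ) • τ m) * E m = 0)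
    (hopt1 : ∀ m, (Λ - (p m : ℂ) • τ m).PosSemidef)
    (hH : ∀ i, ((p i : ℂ) • τ i - Λ.trace • (Λ.trace⁻¹ • Λ)).IsHermitian) :
    (∀ i, specProj (hH i) (fun x => x ≤ 0) = 1) ∧
    (∑ i, p i * (Matrix.trace (τ i * specProj (hH i) (fun x => x ≤ 0))).re)
        - Λ.trace.re =
      1 - ∑ i, p i * (Matrix.trace (τ i * E i)).re :=
  hykl_spectrum_equality_general hτt hp1 hΛdef hΛtr hopt1 hH
end
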